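/- The series ∑_{n=0}^∞ (-1)^n · ((1/2)_n)^3/((1)_n)^3 · (4n+1) converges to 2/π. -/

import Mathlib

open Filter Real

noncomputable def poch (x : ℝ) : ℕ → ℝ
  | 0 => 1
  | n + 1 => poch x n * (x + n)

noncomputable def pochR (x k : ℝ) : ℝ := Real.Gamma (x + k) / Real.Gamma x

/-!
With `c k = (1/2)_k / (1)_k`, the terminating sum
`∑_{k ≤ n} (-1)^k (4k+1) c_k³ · n(n-1)⋯(n-k+1) / (n+3/2)_k = (2n+1) c_n²`
(a case of Dougall's ₅F₄ summation) is proved by the WZ method. Its right side is the reciprocal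
of the `n`-th Wallis product, so it tends to `2/π`. For fixed `k` the weights
`n(n-1)⋯(n-k+1) / (n+3/2)_k` tend to `1`, and for fixed `n` they decrease in `k` from `1` to `0`;
the alternating-series estimate then bounds the tail of the difference between the terminating sum
and the `n`-th partial sum uniformly, so both have the same limit.
-/

open Finset Topology

theorem poch_eq_eval_ascPochhammer (x : ℝ) (n : ℕ) : poch x n = (ascPochhammer ℝ n).eval x := by
  induction n with
  | zero => simp [poch]
  | succ n ih => rw [poch, ih, ascPochhammer_succ_eval]

theorem poch_pos {x : ℝ} (hx : 0 < x) (n : ℕ) : 0 < poch x n := by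
  rw [poch_eq_eval_ascPochhammer]
  exact ascPochhammer_pos n x hx

theorem poch_succ' (x : ℝ) (n : ℕ) : poch x (n + 1) = x * poch (x + 1) n := by
  simp [poch_eq_eval_ascPochhammer, ascPochhammer_succ_left]

theorem poch_neg_natCast_of_lt {m n : ℕ} (h : m < n) : poch (-m) n = 0 := by
  rw [poch_eq_eval_ascPochhammer]
  exact ascPochhammer_eval_neg_coe_nat_of_lt h

theorem sum_range_neg_one_pow_mul_mem_Icc {a : ℕ → ℝ} (ha : Antitone a) (ha₀ : ∀ k, 0 ≤ a k)
    (m K : ℕ) : ∑ i ∈ range m, (-1) ^ i * a (K + i) ∈ Set.Icc 0 (a K) := by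
  induction m generalizing K with
  | zero => simp [ha₀ K]
  | succ m ih =>
    have hs : ∑ i ∈ range m, (-1) ^ (i + 1) * a (K + (i + 1)) =
        -∑ i ∈ range m, (-1) ^ i * a (K + 1 + i) := by
      rw [← sum_neg_distrib]
      exact sum_congr rfl fun i _ => by rw [pow_succ, show K + (i + 1) = K + 1 + i by omega]; ring
    obtain ⟨h₀, h₁⟩ := ih (K + 1)
    rw [sum_range_succ', hs]
    simp only [pow_zero, one_mul, add_zero, Set.mem_Icc]
    constructor <;> linarith [ha K.le_succ]

theorem abs_sum_Ico_neg_one_pow_mul_le {a : ℕ → ℝ} (ha : Antitone a) (ha₀ : ∀ k, 0 ≤ a k)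
    (K N : ℕ) : |∑ k ∈ Ico K N, (-1) ^ k * a k| ≤ a K := by
  obtain ⟨h₀, h₁⟩ := sum_range_neg_one_pow_mul_mem_Icc ha ha₀ (N - K) K
  simp_rw [sum_Ico_eq_sum_range, pow_add, mul_assoc, ← mul_sum, abs_mul, abs_neg_one_pow,
    one_mul, abs_of_nonneg h₀]
  exact h₁

theorem tendsto_sum_range_neg_one_pow_mul_one_sub {a : ℕ → ℝ} {e : ℕ → ℕ → ℝ}
    (ha : Antitone a) (ha₀ : Tendsto a atTop (𝓝 0)) (he : ∀ n, Antitone (e n))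
    (he₀ : ∀ n k, 0 ≤ e n k) (he₁ : ∀ n k, e n k ≤ 1)
    (hlim : ∀ k, Tendsto (fun n => e n k) atTop (𝓝 1)) :
    Tendsto (fun n => ∑ k ∈ range (n + 1), (-1) ^ k * (a k * (1 - e n k))) atTop (𝓝 0) := by
  have ha_nonneg : ∀ k, 0 ≤ a k := ha.le_of_tendsto ha₀
  rw [Metric.tendsto_atTop]
  intro ε hε
  obtain ⟨K, hK⟩ := (ha₀.eventually (gt_mem_nhds (by positivity : (0 : ℝ) < ε / 4))).exists
  have hhead : Tendsto (fun n => ∑ k ∈ range K, (-1) ^ k * (a k * (1 - e n k))) atTop (𝓝 0) := by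
    simpa using tendsto_finsetSum (range K) fun k _ =>
      (((hlim k).const_sub 1).const_mul (a k)).const_mul ((-1) ^ k)
  obtain ⟨N, hN⟩ := Metric.tendsto_atTop.1 hhead (ε / 2) (by positivity)
  refine ⟨max N K, fun n hn => ?_⟩
  have hae : Antitone fun k => a k * e n k :=
    fun i j h => mul_le_mul (ha h) (he n h) (he₀ _ _) (ha_nonneg _)
  have htail : |∑ k ∈ Ico K (n + 1), (-1) ^ k * (a k * (1 - e n k))| ≤ 2 * a K := by
    calc _ = |∑ k ∈ Ico K (n + 1), (-1) ^ k * a k -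
            ∑ k ∈ Ico K (n + 1), (-1) ^ k * (a k * e n k)| := by
          rw [← sum_sub_distrib]
          congr 1
          exact sum_congr rfl fun k _ => by ring
      _ ≤ a K + a K * e n K := (abs_sub _ _).trans (add_le_add
          (abs_sum_Ico_neg_one_pow_mul_le ha ha_nonneg _ _)
          (abs_sum_Ico_neg_one_pow_mul_le hae (fun k => mul_nonneg (ha_nonneg k) (he₀ n k)) _ _))
      _ ≤ 2 * a K := by nlinarith [he₁ n K, ha_nonneg K]
  have hhead_n := hN n (le_of_max_le_left hn)
  rw [Real.dist_eq, sub_zero] at hhead_n ⊢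
  rw [← sum_range_add_sum_Ico _ (by omega : K ≤ n + 1)]
  linarith [abs_add_le (∑ k ∈ range K, (-1) ^ k * (a k * (1 - e n k)))
    (∑ k ∈ Ico K (n + 1), (-1) ^ k * (a k * (1 - e n k)))]

theorem tendsto_natCast_sub_div_add_atTop (a b : ℝ) :
    Tendsto (fun n : ℕ => ((n : ℝ) - a) / (n + b)) atTop (𝓝 1) := by
  have h : Tendsto (fun n : ℕ => (a + b) / ((n : ℝ) + b)) atTop (𝓝 0) :=
    tendsto_const_nhds.div_atTop (tendsto_atTop_add_const_right _ b tendsto_natCast_atTop_atTop)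
  rw [← sub_zero (1 : ℝ)]
  refine (h.const_sub 1).congr' ?_
  filter_upwards [(tendsto_atTop_add_const_right _ b
    tendsto_natCast_atTop_atTop).eventually_gt_atTop 0] with n hn
  field_simp
  ring

theorem sum_range_eq_of_wz {M : Type*} [AddCommGroup M] {F G : ℕ → ℕ → M}
    (hF : ∀ n k, n < k → F n k = 0) (hG₀ : ∀ n, G n 0 = 0) (hG : ∀ n, G n (n + 2) = 0)
    (hFG : ∀ n k, F (n + 1) k - F n k = G n (k + 1) - G n k) (n : ℕ) :
    ∑ k ∈ range (n + 1), F n k = F 0 0 := by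
  induction n with
  | zero => simp
  | succ n ih =>
    calc ∑ k ∈ range (n + 2), F (n + 1) k
        = ∑ k ∈ range (n + 2), (F n k + (G n (k + 1) - G n k)) :=
          sum_congr rfl fun k _ => by rw [← hFG]; abel
      _ = ∑ k ∈ range (n + 1), F n k := by
          rw [sum_add_distrib, sum_range_sub, hG, hG₀, sum_range_succ _ (n + 1),
            hF n (n + 1) n.lt_succ_self]
          abel
      _ = F 0 0 := ih

noncomputable def halfPochRatio (k : ℕ) : ℝ := poch (1 / 2) k / poch 1 k

theorem halfPochRatio_zero : halfPochRatio 0 = 1 := by simp [halfPochRatio, poch]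

theorem halfPochRatio_succ (k : ℕ) :
    halfPochRatio (k + 1) = halfPochRatio k * ((2 * k + 1) / (2 * k + 2)) := by
  have := (poch_pos one_pos k).ne'
  simp only [halfPochRatio, poch]
  field_simp
  ring

theorem halfPochRatio_pos (k : ℕ) : 0 < halfPochRatio k :=
  div_pos (poch_pos (by norm_num) k) (poch_pos one_pos k)

noncomputable def wallisInv (n : ℕ) : ℝ := (2 * n + 1) * halfPochRatio n ^ 2

theorem wallisInv_pos (n : ℕ) : 0 < wallisInv n := by
  have := halfPochRatio_pos n
  unfold wallisInv
  positivity

theorem wallisInv_succ (n : ℕ) :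
    wallisInv (n + 1) = wallisInv n * ((2 * n + 1) * (2 * n + 3) / (2 * n + 2) ^ 2) := by
  simp only [wallisInv, halfPochRatio_succ]
  push_cast
  field_simp
  ring

theorem wallisInv_mul_W (n : ℕ) : wallisInv n * Wallis.W n = 1 := by
  induction n with
  | zero => simp [wallisInv, halfPochRatio_zero, Wallis.W]
  | succ n ih =>
    rw [wallisInv_succ, Wallis.W_succ, ← ih]
    field_simp

theorem tendsto_wallisInv : Tendsto wallisInv atTop (𝓝 (2 / π)) := by
  have h := Wallis.tendsto_W_nhds_pi_div_two.inv₀ (by positivity)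
  rw [inv_div] at h
  refine h.congr fun n => ?_
  exact (eq_inv_of_mul_eq_one_left (wallisInv_mul_W n)).symm

noncomputable def ramanujanTerm (k : ℕ) : ℝ := (4 * k + 1) * halfPochRatio k ^ 3

theorem ramanujanTerm_nonneg (k : ℕ) : 0 ≤ ramanujanTerm k := by
  have := halfPochRatio_pos k
  unfold ramanujanTerm
  positivity

theorem ramanujanTerm_antitone : Antitone ramanujanTerm := by
  refine antitone_nat_of_succ_le fun k => ?_
  have hc := halfPochRatio_pos k
  have key : 0 ≤ (4 * (k : ℝ) + 1) * (2 * k + 2) ^ 3 - (4 * k + 5) * (2 * k + 1) ^ 3 := by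
    ring_nf
    positivity
  calc ramanujanTerm (k + 1)
      = halfPochRatio k ^ 3 * ((4 * k + 5) * (2 * k + 1) ^ 3 / (2 * k + 2) ^ 3) := by
        simp only [ramanujanTerm, halfPochRatio_succ]
        push_cast
        field_simp
        ring
    _ ≤ halfPochRatio k ^ 3 * (4 * k + 1) := by
        gcongr
        rw [div_le_iff₀ (by positivity)]
        linarith
    _ = ramanujanTerm k := mul_comm _ _

theorem tendsto_halfPochRatio : Tendsto halfPochRatio atTop (𝓝 0) := by
  have hsq : Tendsto (fun k => halfPochRatio k ^ 2) atTop (𝓝 0) := by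
    refine (tendsto_wallisInv.div_atTop (tendsto_atTop_add_const_right _ 1
      (tendsto_natCast_atTop_atTop.const_mul_atTop two_pos))).congr fun k => ?_
    simp only [wallisInv]
    field_simp
  have h := (continuous_sqrt.tendsto 0).comp hsq
  rw [sqrt_zero] at h
  exact h.congr fun k => sqrt_sq (halfPochRatio_pos k).le

theorem tendsto_ramanujanTerm : Tendsto ramanujanTerm atTop (𝓝 0) := by
  have h := (tendsto_wallisInv.mul tendsto_halfPochRatio).const_mul 2
  simp only [mul_zero] at h
  refine squeeze_zero ramanujanTerm_nonneg (fun k => ?_) h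
  have := halfPochRatio_pos k
  simp only [ramanujanTerm, wallisInv]
  have : (4 * (k : ℝ) + 1) ≤ 2 * (2 * k + 1) := by linarith
  calc (4 * (k : ℝ) + 1) * halfPochRatio k ^ 3 ≤ 2 * (2 * k + 1) * halfPochRatio k ^ 3 := by gcongr
    _ = _ := by ring

noncomputable def dougallSummand (n k : ℕ) : ℝ :=
  ramanujanTerm k * poch (-n) k / (poch (n + 3 / 2) k * wallisInv n)

-- The WZ certificate `R(n, k) · dougallSummand n k`, `R = -4k³ / ((4k+1)(2n+1)(n+1-k))`, rewritten
-- through `(n + 1 - k) (-n)_k = (n + 1) (-(n+1))_k` so that it has no pole at `k = n + 1`.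
noncomputable def dougallCertificate (n k : ℕ) : ℝ :=
  -4 * k ^ 3 * halfPochRatio k ^ 3 * poch (-(n + 1)) k /
    ((2 * n + 1) * (n + 1) * poch (n + 3 / 2) k * wallisInv n)

theorem dougallSummand_wz (n k : ℕ) :
    dougallSummand (n + 1) k - dougallSummand n k =
      dougallCertificate n (k + 1) - dougallCertificate n k := by
  have hP : poch (-n) k = poch (-(n + 1)) k * (n + 1 - k) / (n + 1) := by
    have h := poch_succ' (-(n + 1)) k
    rw [poch, show -((n : ℝ) + 1) + 1 = -n by ring] at h
    rw [eq_div_iff (by positivity)]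
    linear_combination h
  have hQ : poch (n + 1 + 3 / 2) k = poch (n + 3 / 2) k * (n + 3 / 2 + k) / (n + 3 / 2) := by
    have h := poch_succ' (n + 3 / 2) k
    rw [poch, show (n : ℝ) + 3 / 2 + 1 = n + 1 + 3 / 2 by ring] at h
    rw [eq_div_iff (by positivity)]
    linear_combination -h
  have hB := (wallisInv_pos n).ne'
  have hQ₀ := (poch_pos (by positivity : (0 : ℝ) < n + 3 / 2) k).ne'
  simp only [dougallSummand, dougallCertificate, ramanujanTerm, wallisInv_succ,
    halfPochRatio_succ, poch]
  push_cast
  rw [hP, hQ]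
  field_simp
  ring

theorem sum_dougallSummand (n : ℕ) : ∑ k ∈ range (n + 1), dougallSummand n k = 1 := by
  rw [sum_range_eq_of_wz (G := dougallCertificate) _ _ _ dougallSummand_wz]
  · simp [dougallSummand, ramanujanTerm, halfPochRatio_zero, wallisInv, poch]
  · intro n k h
    simp [dougallSummand, poch_neg_natCast_of_lt h]
  · simp [dougallCertificate]
  · intro n
    have h : -((n : ℝ) + 1) = -((n + 1 : ℕ) : ℝ) := by push_cast; ring
    simp [dougallCertificate, h, poch_neg_natCast_of_lt (n + 1).lt_succ_self]

-- `(-1)^k (-n)_k = n (n - 1) ⋯ (n - k + 1)`, which vanishes for `k > n`.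
noncomputable def dougallWeight (n k : ℕ) : ℝ := (-1) ^ k * poch (-n) k / poch (n + 3 / 2) k

theorem sum_neg_one_pow_mul_ramanujanTerm_mul_dougallWeight (n : ℕ) :
    ∑ k ∈ range (n + 1), (-1) ^ k * (ramanujanTerm k * dougallWeight n k) = wallisInv n := by
  have h := congrArg (· * wallisInv n) (sum_dougallSummand n)
  simp only [sum_mul, one_mul] at h
  rw [← h]
  refine sum_congr rfl fun k _ => ?_
  have := (wallisInv_pos n).ne'
  have := (poch_pos (by positivity : (0 : ℝ) < n + 3 / 2) k).ne'
  simp only [dougallSummand, dougallWeight]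
  field_simp
  rw [← pow_mul, pow_mul', neg_one_sq, one_pow, one_mul]

theorem dougallWeight_zero_right (n : ℕ) : dougallWeight n 0 = 1 := by simp [dougallWeight, poch]

theorem dougallWeight_succ (n k : ℕ) :
    dougallWeight n (k + 1) = dougallWeight n k * ((n - k) / (n + 3 / 2 + k)) := by
  have := (poch_pos (by positivity : (0 : ℝ) < n + 3 / 2) k).ne'
  simp only [dougallWeight, poch]
  field_simp
  ring

theorem dougallWeight_eq_zero {n k : ℕ} (h : n < k) : dougallWeight n k = 0 := by
  simp [dougallWeight, poch_neg_natCast_of_lt h]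

theorem dougallWeight_nonneg (n k : ℕ) : 0 ≤ dougallWeight n k := by
  induction k with
  | zero => simp [dougallWeight_zero_right]
  | succ k ih =>
    rcases lt_or_ge n (k + 1) with h | h
    · rw [dougallWeight_eq_zero h]
    · have : (k : ℝ) + 1 ≤ n := by exact_mod_cast h
      rw [dougallWeight_succ]
      exact mul_nonneg ih (div_nonneg (by linarith) (by positivity))

theorem dougallWeight_antitone (n : ℕ) : Antitone (dougallWeight n) := by
  refine antitone_nat_of_succ_le fun k => ?_
  rcases lt_or_ge n (k + 1) with h | h
  · rw [dougallWeight_eq_zero h]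
    exact dougallWeight_nonneg n k
  · have : (k : ℝ) + 1 ≤ n := by exact_mod_cast h
    rw [dougallWeight_succ]
    exact mul_le_of_le_one_right (dougallWeight_nonneg n k)
      (div_le_one_of_le₀ (by linarith) (by positivity))

theorem dougallWeight_le_one (n k : ℕ) : dougallWeight n k ≤ 1 := by
  simpa [dougallWeight_zero_right] using dougallWeight_antitone n k.zero_le

theorem tendsto_dougallWeight (k : ℕ) : Tendsto (fun n => dougallWeight n k) atTop (𝓝 1) := by
  induction k with
  | zero => simp [dougallWeight_zero_right]
  | succ k ih =>
    simp_rw [dougallWeight_succ, add_assoc]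
    simpa using ih.mul (tendsto_natCast_sub_div_add_atTop k (3 / 2 + k))

theorem stmt_1 :
    Filter.Tendsto (fun N => ∑ n ∈ Finset.range N,
      (-1 : ℝ)^n * (poch (1/2) n)^3 / (poch 1 n)^3 * (4*(n:ℝ)+1))
      Filter.atTop (nhds (2 / Real.pi)) := by
  have hterm : ∀ n : ℕ, (-1 : ℝ) ^ n * (poch (1 / 2) n) ^ 3 / (poch 1 n) ^ 3 * (4 * (n : ℝ) + 1) =
      (-1) ^ n * ramanujanTerm n := fun n => by
    simp only [ramanujanTerm, halfPochRatio, div_pow]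
    ring
  simp_rw [hterm]
  rw [← tendsto_add_atTop_iff_nat 1]
  have h := (tendsto_sum_range_neg_one_pow_mul_one_sub ramanujanTerm_antitone
    tendsto_ramanujanTerm dougallWeight_antitone dougallWeight_nonneg dougallWeight_le_one
    tendsto_dougallWeight).add tendsto_wallisInv
  rw [zero_add] at h
  refine h.congr fun n => ?_
  rw [← sum_neg_one_pow_mul_ramanujanTerm_mul_dougallWeight n, ← sum_add_distrib]
  exact sum_congr rfl fun k _ => by ring
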